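/- Let p ∈ (1,∞) and δ ≥ 0 (change of shift for conjugate functions). For every ε ∈ (0,1) there exists a constant c_ε > 0 depending only on p and ε such that for all 3×3 real matrices P, Q and all t ≥ 0 one has both (φ_{|P|})*(t) ≤ c_ε·(φ_{|Q|})*(t) + ε·φ_{|P|}(|P−Q|) and (φ_{|P|})*(t) ≤ c_ε·(φ_{|Q|})*(t) + ε·φ_{|Q|}(|P−Q|), where (φ_a)* denotes the convex conjugate of φ_a and |·| the Frobenius norm. -/

import Mathlib

/-- The derivative `φ'(t) = (δ+t)^(p-2)·t` of the N-function `φ = φ_{p,δ}`. -/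
noncomputable def phiDeriv (p δ t : ℝ) : ℝ := (δ + t) ^ (p - 2) * t

/-- The shifted N-function `φ_a(t) = ∫₀ᵗ φ'(a+s)·s/(a+s) ds`. -/
noncomputable def phiShift (p δ a t : ℝ) : ℝ :=
  ∫ s in (0:ℝ)..t, phiDeriv p δ (a + s) * s / (a + s)

/-- The convex conjugate of an N-function: `ψ*(s) = sup_{t ≥ 0} (s·t − ψ(t))`. -/
noncomputable def conjFun (ψ : ℝ → ℝ) (s : ℝ) : ℝ :=
  sSup ((fun t => s * t - ψ t) '' Set.Ici 0)

/-- The Frobenius norm of a 3×3 real matrix. -/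
noncomputable def frob (P : Matrix (Fin 3) (Fin 3) ℝ) : ℝ :=
  Real.sqrt (∑ i, ∑ j, (P i j) ^ 2)

/-
Since `φ_{p,δ}(t) = ∫₀ᵗ (δ+s)^(p-2) s ds`, the shifted function `φ_a` of `φ_{p,δ}` is `φ_{p,δ+a}`,
and `| |P| - |Q| | ≤ |P - Q|`; so it suffices to compare `φ_A = φ_{p,A}` and `φ_B` for scalars
`A, B ≥ 0` with `|A - B| ≤ d`.

Up to factors depending only on `p`, `φ_A(w) ≃ (A+w)^(p-2) w²`, and `(A+w)/2 ≤ B+w ≤ 2(A+w)` once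
`|A - B| ≤ w`; with `w = max v d` and monotonicity this gives `φ_B(v) ≤ K (φ_A(v) + φ_A(d))`.
Moreover `φ_B(θu) ≤ θ^q φ_B(u)` for `θ ≤ 1` and `q = min p 2`, which dualises to
`φ_B*(t/θ) ≤ θ^(-q') φ_B*(t)`. Young's inequality then gives
`tu - φ_A(u) ≤ φ_B*(t/θ) + φ_B(θu) - φ_A(u) ≤ θ^(-q') φ_B*(t) + θ^q K (φ_A(u) + φ_A(d)) - φ_A(u)`,
and a small `θ` absorbs the `φ_A(u)` terms. The second inequality follows from `φ_A(d) ≤ K φ_B(d)`.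
-/

open MeasureTheory Set Filter

noncomputable def phi (p δ t : ℝ) : ℝ := ∫ s in (0:ℝ)..t, phiDeriv p δ s

lemma rpow_le_two_rpow_abs_mul_rpow {x y r : ℝ} (hx : 0 ≤ x) (hxy : x ≤ 2 * y)
    (hyx : y ≤ 2 * x) : x ^ r ≤ 2 ^ |r| * y ^ r := by
  rcases hx.eq_or_lt with rfl | hx0
  · obtain rfl : y = 0 := by linarith
    exact le_mul_of_one_le_left (Real.rpow_nonneg le_rfl r)
      (Real.one_le_rpow one_le_two (abs_nonneg r))
  rcases le_total 0 r with hr | hr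
  · calc x ^ r ≤ (2 * y) ^ r := Real.rpow_le_rpow hx hxy hr
      _ = 2 ^ |r| * y ^ r := by rw [abs_of_nonneg hr, Real.mul_rpow zero_le_two (by linarith)]
  · calc x ^ r ≤ (y / 2) ^ r := Real.rpow_le_rpow_of_nonpos (by linarith) (by linarith) hr
      _ = 2 ^ |r| * y ^ r := by
        rw [abs_of_nonpos hr, Real.div_rpow (by linarith) zero_le_two, Real.rpow_neg zero_le_two,
          div_eq_inv_mul]

section NFunction

variable {p δ : ℝ}

lemma phiDeriv_nonneg (hδ : 0 ≤ δ) {t : ℝ} (ht : 0 ≤ t) : 0 ≤ phiDeriv p δ t :=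
  mul_nonneg (Real.rpow_nonneg (by linarith) _) ht

lemma phiDeriv_eq_rpow_mul_div (hδ : 0 ≤ δ) {t : ℝ} (ht : 0 ≤ t) :
    phiDeriv p δ t = (δ + t) ^ (p - 1) * (t / (δ + t)) := by
  rcases (add_nonneg hδ ht).eq_or_lt with h | h
  · obtain rfl : t = 0 := by linarith
    simp [phiDeriv]
  · rw [phiDeriv, show p - 2 = p - 1 - 1 by ring, Real.rpow_sub_one h.ne']
    ring

lemma phiDeriv_monotoneOn (hp : 1 < p) (hδ : 0 ≤ δ) : MonotoneOn (phiDeriv p δ) (Ici 0) := by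
  rintro x (hx : 0 ≤ x) y (hy : 0 ≤ y) hxy
  rw [phiDeriv_eq_rpow_mul_div hδ hx, phiDeriv_eq_rpow_mul_div hδ hy]
  refine mul_le_mul (Real.rpow_le_rpow (by linarith) (by linarith) (by linarith)) ?_
    (div_nonneg hx (by linarith)) (Real.rpow_nonneg (by linarith) _)
  rcases (add_nonneg hδ hx).eq_or_lt with h | h
  · rw [← h, div_zero]
    exact div_nonneg hy (by linarith)
  · rw [div_le_div_iff₀ h (by linarith)]
    nlinarith

lemma intervalIntegrable_phiDeriv (hp : 1 < p) (hδ : 0 ≤ δ) {a b : ℝ} (ha : 0 ≤ a) (hb : 0 ≤ b) :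
    IntervalIntegrable (phiDeriv p δ) volume a b :=
  ((phiDeriv_monotoneOn hp hδ).mono fun _ hs => (le_inf ha hb).trans hs.1).intervalIntegrable

lemma phiDeriv_mul_le (hδ : 0 ≤ δ) {θ s : ℝ} (hθ0 : 0 < θ) (hθ1 : θ ≤ 1) (hs : 0 ≤ s) :
    phiDeriv p δ (θ * s) ≤ θ ^ (min p 2 - 1) * phiDeriv p δ s := by
  unfold phiDeriv
  rcases le_total 2 p with hp2 | hp2
  · rw [min_eq_right hp2, show (2:ℝ) - 1 = 1 by norm_num, Real.rpow_one]
    have : (δ + θ * s) ^ (p - 2) ≤ (δ + s) ^ (p - 2) :=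
      Real.rpow_le_rpow (by positivity) (by nlinarith) (by linarith)
    calc (δ + θ * s) ^ (p - 2) * (θ * s) ≤ (δ + s) ^ (p - 2) * (θ * s) := by gcongr
      _ = θ * ((δ + s) ^ (p - 2) * s) := by ring
  · rcases hs.eq_or_lt with rfl | hs0
    · simp
    rw [min_eq_left hp2, show p - 1 = p - 2 + 1 by ring, Real.rpow_add_one hθ0.ne']
    -- for `p < 2` the base `δ + θ s` dominates `θ (δ + s)` and the exponent is negative
    have : (δ + θ * s) ^ (p - 2) ≤ θ ^ (p - 2) * (δ + s) ^ (p - 2) := by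
      rw [← Real.mul_rpow hθ0.le (by linarith)]
      exact Real.rpow_le_rpow_of_nonpos (by positivity) (by nlinarith) (by linarith)
    calc (δ + θ * s) ^ (p - 2) * (θ * s) ≤ θ ^ (p - 2) * (δ + s) ^ (p - 2) * (θ * s) := by
          gcongr
      _ = θ ^ (p - 2) * θ * ((δ + s) ^ (p - 2) * s) := by ring

lemma tendsto_phiDeriv_atTop (hp : 1 < p) (hδ : 0 ≤ δ) :
    Tendsto (phiDeriv p δ) atTop atTop := by
  refine tendsto_atTop_mono' atTop ?_
    ((tendsto_rpow_atTop (sub_pos.2 hp)).atTop_div_const two_pos)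
  filter_upwards [eventually_ge_atTop δ, eventually_gt_atTop 0] with s hδs hs
  rw [phiDeriv_eq_rpow_mul_div hδ hs.le, div_eq_mul_one_div]
  exact mul_le_mul (Real.rpow_le_rpow hs.le (by linarith) (by linarith))
    (by rw [div_le_div_iff₀ two_pos (by linarith)]; linarith) (by norm_num)
    (Real.rpow_nonneg (by linarith) _)

lemma phi_nonneg (hδ : 0 ≤ δ) {t : ℝ} (ht : 0 ≤ t) : 0 ≤ phi p δ t :=
  intervalIntegral.integral_nonneg ht fun _ hs => phiDeriv_nonneg hδ hs.1

lemma phi_mono (hp : 1 < p) (hδ : 0 ≤ δ) {s t : ℝ} (hs : 0 ≤ s) (hst : s ≤ t) :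
    phi p δ s ≤ phi p δ t :=
  intervalIntegral.integral_mono_interval le_rfl hs hst
    (ae_restrict_of_forall_mem measurableSet_Ioc fun _ hu => phiDeriv_nonneg hδ hu.1.le)
    (intervalIntegrable_phiDeriv hp hδ le_rfl (hs.trans hst))

lemma phi_le_phiDeriv_mul (hp : 1 < p) (hδ : 0 ≤ δ) {t : ℝ} (ht : 0 ≤ t) :
    phi p δ t ≤ phiDeriv p δ t * t :=
  calc phi p δ t ≤ ∫ _ in (0:ℝ)..t, phiDeriv p δ t :=
        intervalIntegral.integral_mono_on ht (intervalIntegrable_phiDeriv hp hδ le_rfl ht)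
          intervalIntegrable_const fun _ hs => phiDeriv_monotoneOn hp hδ hs.1 ht hs.2
    _ = phiDeriv p δ t * t := by
        rw [intervalIntegral.integral_const, smul_eq_mul, sub_zero, mul_comm]

lemma phiDeriv_half_mul_le_phi (hp : 1 < p) (hδ : 0 ≤ δ) {t : ℝ} (ht : 0 ≤ t) :
    phiDeriv p δ (t / 2) * (t / 2) ≤ phi p δ t := by
  have h2 : 0 ≤ t / 2 := by linarith
  calc phiDeriv p δ (t / 2) * (t / 2) = ∫ _ in (t / 2)..t, phiDeriv p δ (t / 2) := by
        rw [intervalIntegral.integral_const, smul_eq_mul]; ring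
    _ ≤ ∫ s in (t / 2)..t, phiDeriv p δ s :=
        intervalIntegral.integral_mono_on (by linarith) intervalIntegrable_const
          (intervalIntegrable_phiDeriv hp hδ h2 ht)
          fun _ hs => phiDeriv_monotoneOn hp hδ h2 (h2.trans hs.1) hs.1
    _ ≤ phi p δ t := by
        rw [phi, ← intervalIntegral.integral_add_adjacent_intervals
          (intervalIntegrable_phiDeriv hp hδ le_rfl h2) (intervalIntegrable_phiDeriv hp hδ h2 ht)]
        exact le_add_of_nonneg_left (phi_nonneg hδ h2)

lemma phiDeriv_mul_le_phi (hp : 1 < p) (hδ : 0 ≤ δ) {t : ℝ} (ht : 0 ≤ t) :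
    phiDeriv p δ t * t ≤ 4 * 2 ^ |p - 2| * phi p δ t := by
  have hcmp : (δ + t) ^ (p - 2) ≤ 2 ^ |p - 2| * (δ + t / 2) ^ (p - 2) :=
    rpow_le_two_rpow_abs_mul_rpow (by linarith) (by linarith) (by linarith)
  calc phiDeriv p δ t * t = 4 * ((δ + t) ^ (p - 2) * (t / 2) * (t / 2)) := by
        unfold phiDeriv; ring
    _ ≤ 4 * (2 ^ |p - 2| * (δ + t / 2) ^ (p - 2) * (t / 2) * (t / 2)) := by gcongr
    _ = 4 * 2 ^ |p - 2| * (phiDeriv p δ (t / 2) * (t / 2)) := by unfold phiDeriv; ring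
    _ ≤ 4 * 2 ^ |p - 2| * phi p δ t := by
        gcongr
        exact phiDeriv_half_mul_le_phi hp hδ ht

lemma phi_mul_le (hp : 1 < p) (hδ : 0 ≤ δ) {θ u : ℝ} (hθ0 : 0 < θ) (hθ1 : θ ≤ 1) (hu : 0 ≤ u) :
    phi p δ (θ * u) ≤ θ ^ min p 2 * phi p δ u := by
  have hint : IntervalIntegrable (fun s => phiDeriv p δ (θ * s)) volume 0 u := by
    refine MonotoneOn.intervalIntegrable fun x hx y hy hxy => ?_
    rw [uIcc_of_le hu] at hx hy
    exact phiDeriv_monotoneOn hp hδ (mul_nonneg hθ0.le hx.1) (mul_nonneg hθ0.le hy.1)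
      (by gcongr)
  calc phi p δ (θ * u) = θ * ∫ s in (0:ℝ)..u, phiDeriv p δ (θ * s) := by
        rw [intervalIntegral.integral_comp_mul_left _ hθ0.ne', mul_zero, smul_eq_mul,
          mul_inv_cancel_left₀ hθ0.ne', phi]
    _ ≤ θ * ∫ s in (0:ℝ)..u, θ ^ (min p 2 - 1) * phiDeriv p δ s := by
        gcongr
        exact intervalIntegral.integral_mono_on hu hint
          ((intervalIntegrable_phiDeriv hp hδ le_rfl hu).const_mul _)
          fun _ hs => phiDeriv_mul_le hδ hθ0 hθ1 hs.1
    _ = θ ^ min p 2 * phi p δ u := by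
        rw [intervalIntegral.integral_const_mul, Real.rpow_sub_one hθ0.ne', phi]
        field_simp

lemma phi_le_mul_phi_of_abs_sub_le (hp : 1 < p) {δ' w : ℝ} (hδ : 0 ≤ δ) (hδ' : 0 ≤ δ')
    (hw : |δ - δ'| ≤ w) : phi p δ' w ≤ 4 * 4 ^ |p - 2| * phi p δ w := by
  have hw0 : 0 ≤ w := (abs_nonneg _).trans hw
  obtain ⟨h1, h2⟩ := abs_le.1 hw
  have hcmp : (δ' + w) ^ (p - 2) ≤ 2 ^ |p - 2| * (δ + w) ^ (p - 2) :=
    rpow_le_two_rpow_abs_mul_rpow (by linarith) (by linarith) (by linarith)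
  have h4 : (4:ℝ) ^ |p - 2| = 2 ^ |p - 2| * 2 ^ |p - 2| := by
    rw [← Real.mul_rpow zero_le_two zero_le_two]; norm_num
  calc phi p δ' w ≤ phiDeriv p δ' w * w := phi_le_phiDeriv_mul hp hδ' hw0
    _ ≤ 2 ^ |p - 2| * (phiDeriv p δ w * w) := by
        have := mul_le_mul_of_nonneg_right hcmp (mul_nonneg hw0 hw0)
        unfold phiDeriv
        linarith
    _ ≤ 2 ^ |p - 2| * (4 * 2 ^ |p - 2| * phi p δ w) :=
        mul_le_mul_of_nonneg_left (phiDeriv_mul_le_phi hp hδ hw0) (by positivity)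
    _ = 4 * 4 ^ |p - 2| * phi p δ w := by rw [h4]; ring

lemma phi_le_mul_phi_add_phi_of_abs_sub_le (hp : 1 < p) {δ' v d : ℝ} (hδ : 0 ≤ δ)
    (hδ' : 0 ≤ δ') (hd : |δ - δ'| ≤ d) (hv : 0 ≤ v) :
    phi p δ' v ≤ 4 * 4 ^ |p - 2| * (phi p δ v + phi p δ d) := by
  have hd0 : 0 ≤ d := (abs_nonneg _).trans hd
  calc phi p δ' v ≤ phi p δ' (max v d) := phi_mono hp hδ' hv (le_max_left v d)
    _ ≤ 4 * 4 ^ |p - 2| * phi p δ (max v d) :=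
        phi_le_mul_phi_of_abs_sub_le hp hδ hδ' (hd.trans (le_max_right v d))
    _ ≤ 4 * 4 ^ |p - 2| * (phi p δ v + phi p δ d) := by
        gcongr
        rcases le_total v d with h | h
        · rw [max_eq_right h]; linarith [phi_nonneg (p := p) hδ hv]
        · rw [max_eq_left h]; linarith [phi_nonneg (p := p) hδ hd0]

lemma bddAbove_mul_sub_phi (hp : 1 < p) (hδ : 0 ≤ δ) (t : ℝ) :
    BddAbove ((fun u => t * u - phi p δ u) '' Ici 0) := by
  obtain ⟨U, hU⟩ := eventually_atTop.1
    ((tendsto_phiDeriv_atTop hp hδ).eventually_ge_atTop (2 * |t|))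
  refine ⟨|t| * (2 * |U|), ?_⟩
  rintro _ ⟨u, hu : 0 ≤ u, rfl⟩
  have htu : t * u ≤ |t| * u := mul_le_mul_of_nonneg_right (le_abs_self t) hu
  rcases le_total u (2 * |U|) with h | h
  · have := phi_nonneg (p := p) hδ hu
    nlinarith [abs_nonneg t]
  · have hUu : U ≤ u / 2 := by linarith [le_abs_self U]
    have := phiDeriv_half_mul_le_phi hp hδ hu
    nlinarith [abs_nonneg t, abs_nonneg U, mul_le_mul_of_nonneg_right (hU _ hUu)
      (by linarith : 0 ≤ u / 2)]

end NFunction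

section Conjugate

variable {ψ : ℝ → ℝ} {t : ℝ}

lemma le_conjFun (hψ : BddAbove ((fun u => t * u - ψ u) '' Ici 0)) {u : ℝ} (hu : 0 ≤ u) :
    t * u - ψ u ≤ conjFun ψ t :=
  le_csSup hψ ⟨u, hu, rfl⟩

lemma conjFun_le {M : ℝ} (h : ∀ u, 0 ≤ u → t * u - ψ u ≤ M) : conjFun ψ t ≤ M :=
  csSup_le (nonempty_Ici.image _) (by rintro _ ⟨u, hu, rfl⟩; exact h u hu)

lemma conjFun_mul_le {q l : ℝ} (hq : 1 < q)
    (hψ : ∀ θ u, 0 < θ → θ ≤ 1 → 0 ≤ u → ψ (θ * u) ≤ θ ^ q * ψ u)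
    (hbdd : BddAbove ((fun u => t * u - ψ u) '' Ici 0)) (hl : 1 ≤ l) :
    conjFun ψ (l * t) ≤ l ^ (q / (q - 1)) * conjFun ψ t := by
  have hq1 : q - 1 ≠ 0 := (sub_pos.2 hq).ne'
  -- substitute `u = γ v` with `γ ^ (q - 1) = l`
  set γ := l ^ (1 / (q - 1)) with hγ
  have hγ1 : 1 ≤ γ := Real.one_le_rpow hl (by have := sub_pos.2 hq; positivity)
  have hγ0 : 0 < γ := by linarith
  have hγq : γ ^ q = l ^ (q / (q - 1)) := by
    rw [hγ, ← Real.rpow_mul (by linarith)]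
    congr 1
    field_simp
  have hlγ : l * γ = γ ^ q := by
    rw [hγq, hγ, ← Real.rpow_one_add' (by linarith) (by have := sub_pos.2 hq; positivity)]
    congr 1
    field_simp
    ring
  rw [← hγq]
  refine conjFun_le fun u hu => ?_
  have hψu : γ ^ q * ψ (γ⁻¹ * u) ≤ ψ u := by
    have := hψ γ⁻¹ u (inv_pos.2 hγ0) (inv_le_one_of_one_le₀ hγ1) hu
    rw [Real.inv_rpow hγ0.le] at this
    have hγq0 : 0 < γ ^ q := by positivity
    calc γ ^ q * ψ (γ⁻¹ * u) ≤ γ ^ q * ((γ ^ q)⁻¹ * ψ u) := by gcongr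
      _ = ψ u := by field_simp
  have htu : γ ^ q * (t * (γ⁻¹ * u)) = l * t * u := by
    rw [← hlγ]
    field_simp
  calc l * t * u - ψ u ≤ γ ^ q * (t * (γ⁻¹ * u) - ψ (γ⁻¹ * u)) := by
        rw [mul_sub, htu]
        linarith
    _ ≤ γ ^ q * conjFun ψ t := by
        gcongr
        exact le_conjFun hbdd (by positivity)

end Conjugate

lemma conjFun_phi_le {p δ δ' d θ : ℝ} (hp : 1 < p) (hδ : 0 ≤ δ) (hδ' : 0 ≤ δ')
    (hd : |δ - δ'| ≤ d) (hθ0 : 0 < θ) (hθ1 : θ ≤ 1)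
    (hθK : θ ^ min p 2 * (4 * 4 ^ |p - 2|) ≤ 1) (t : ℝ) :
    conjFun (phi p δ) t ≤ θ⁻¹ ^ (min p 2 / (min p 2 - 1)) * conjFun (phi p δ') t
      + θ ^ min p 2 * (4 * 4 ^ |p - 2|) * phi p δ d := by
  have hscale := conjFun_mul_le (lt_min hp one_lt_two)
    (fun _ _ hθ0 hθ1 hu => phi_mul_le hp hδ' hθ0 hθ1 hu) (bddAbove_mul_sub_phi hp hδ' t)
    ((one_le_inv₀ hθ0).2 hθ1)
  refine conjFun_le fun u hu => ?_
  -- Young's inequality for `φ_{δ'}` at the pair `(t / θ, θ u)`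
  have hyoung := le_conjFun (bddAbove_mul_sub_phi hp hδ' (θ⁻¹ * t)) (mul_nonneg hθ0.le hu)
  rw [show θ⁻¹ * t * (θ * u) = t * u by field_simp] at hyoung
  have hshift := mul_le_mul_of_nonneg_left
    (phi_le_mul_phi_add_phi_of_abs_sub_le hp hδ hδ' hd hu) (by positivity : 0 ≤ θ ^ min p 2)
  have hsmall := mul_le_mul_of_nonneg_right hθK (phi_nonneg (p := p) hδ hu)
  linarith [phi_mul_le hp hδ' hθ0 hθ1 hu]

theorem exists_conjFun_phi_le {p ε : ℝ} (hp : 1 < p) (hε0 : 0 < ε) (hε1 : ε < 1) :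
    ∃ c : ℝ, 0 < c ∧ ∀ ⦃δ δ' d : ℝ⦄, 0 ≤ δ → 0 ≤ δ' → |δ - δ'| ≤ d → ∀ t : ℝ,
      conjFun (phi p δ) t ≤ c * conjFun (phi p δ') t + ε * phi p δ d ∧
      conjFun (phi p δ) t ≤ c * conjFun (phi p δ') t + ε * phi p δ' d := by
  set q := min p 2
  set K : ℝ := 4 * 4 ^ |p - 2|
  have hq : 0 < q := lt_min (by linarith) two_pos
  have hK : 1 ≤ K := by
    have := Real.one_le_rpow (by norm_num : (1:ℝ) ≤ 4) (abs_nonneg (p - 2))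
    linarith
  have hεK : 0 < ε / (K * K) := by positivity
  -- `θ ^ q * K ^ 2 = ε`: one factor `K` from the change of shift, one from `φ_δ(d) ≤ K φ_{δ'}(d)`
  set θ := (ε / (K * K)) ^ q⁻¹
  have hθq : θ ^ q = ε / (K * K) := by
    rw [← Real.rpow_mul hεK.le, inv_mul_cancel₀ hq.ne', Real.rpow_one]
  have hθ0 : 0 < θ := Real.rpow_pos_of_pos hεK _
  have hθ1 : θ ≤ 1 :=
    Real.rpow_le_one hεK.le (div_le_one_of_le₀ (by nlinarith) (by positivity)) (by positivity)
  have hθK : θ ^ q * K ≤ ε := by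
    rw [hθq, div_mul_eq_mul_div, div_le_iff₀ (by positivity)]
    nlinarith [mul_le_mul_of_nonneg_left hK (by positivity : 0 ≤ ε * K)]
  refine ⟨θ⁻¹ ^ (q / (q - 1)), Real.rpow_pos_of_pos (inv_pos.2 hθ0) _,
    fun δ δ' d hδ hδ' hd t => ?_⟩
  have H := conjFun_phi_le hp hδ hδ' hd hθ0 hθ1 (hθK.trans hε1.le) t
  have hd0 : 0 ≤ d := (abs_nonneg _).trans hd
  constructor
  · refine H.trans ?_
    gcongr
    exact phi_nonneg hδ hd0
  · refine H.trans ?_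
    have hchange := phi_le_mul_phi_of_abs_sub_le (w := d) hp hδ' hδ (by rwa [abs_sub_comm])
    calc θ⁻¹ ^ (q / (q - 1)) * conjFun (phi p δ') t + θ ^ q * K * phi p δ d
        ≤ θ⁻¹ ^ (q / (q - 1)) * conjFun (phi p δ') t + θ ^ q * K * (K * phi p δ' d) := by
          gcongr
      _ = θ⁻¹ ^ (q / (q - 1)) * conjFun (phi p δ') t + ε * phi p δ' d := by
          rw [hθq]
          field_simp

lemma phiShift_eq_phi (p δ a : ℝ) : phiShift p δ a = phi p (δ + a) := by
  funext t
  refine intervalIntegral.integral_congr_ae ?_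
  filter_upwards [(countable_singleton (-a)).ae_notMem volume] with s hs _
  have hs' : a + s ≠ 0 := fun h => hs (by simp; linarith)
  rw [phiDeriv, phiDeriv, add_assoc]
  field_simp

section Frobenius

attribute [local instance] Matrix.frobeniusNormedAddCommGroup

lemma frob_eq_norm (P : Matrix (Fin 3) (Fin 3) ℝ) : frob P = ‖P‖ := by
  simp [frob, Matrix.frobenius_norm_def, Real.sqrt_eq_rpow]

lemma abs_frob_sub_frob_le (P Q : Matrix (Fin 3) (Fin 3) ℝ) :
    |frob P - frob Q| ≤ frob (P - Q) := by
  simpa only [frob_eq_norm] using abs_norm_sub_norm_le P Q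

end Frobenius

/-- Change of shift for conjugate functions: for `p ∈ (1,∞)` and every `ε ∈ (0,1)`
there exists `c_ε > 0` depending only on `p` and `ε` such that for all `δ ≥ 0`, all
3×3 matrices `P, Q` and all `t ≥ 0`:
`(φ_{|P|})*(t) ≤ c_ε·(φ_{|Q|})*(t) + ε·φ_{|P|}(|P−Q|)` and
`(φ_{|P|})*(t) ≤ c_ε·(φ_{|Q|})*(t) + ε·φ_{|Q|}(|P−Q|)`. -/
theorem shift_change_conj (p : ℝ) (hp : 1 < p) (ε : ℝ) (hε0 : 0 < ε) (hε1 : ε < 1) :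
    ∃ c : ℝ, 0 < c ∧
      ∀ δ : ℝ, 0 ≤ δ → ∀ P Q : Matrix (Fin 3) (Fin 3) ℝ, ∀ t : ℝ, 0 ≤ t →
        conjFun (phiShift p δ (frob P)) t
            ≤ c * conjFun (phiShift p δ (frob Q)) t
              + ε * phiShift p δ (frob P) (frob (P - Q)) ∧
        conjFun (phiShift p δ (frob P)) t
            ≤ c * conjFun (phiShift p δ (frob Q)) t
              + ε * phiShift p δ (frob Q) (frob (P - Q)) := by
  obtain ⟨c, hc, H⟩ := exists_conjFun_phi_le hp hε0 hε1
  refine ⟨c, hc, fun δ hδ P Q t _ => ?_⟩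
  simp only [phiShift_eq_phi]
  refine H (add_nonneg hδ (Real.sqrt_nonneg _)) (add_nonneg hδ (Real.sqrt_nonneg _)) ?_ t
  rw [add_sub_add_left_eq_sub]
  exact abs_frob_sub_frob_le P Q
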